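/- arXiv:2604.25063 — 8 statements merged into one kernel-verified Lean document; each statement's English description precedes it below -/
import Mathlib

section
/- Let X be a metric space, let (μ_n) be Borel probability measures on X converging in the weak* topology to a Borel probability measure μ, and let (B_n) be a sequence of Borel subsets of X. Set Y := ⋂_{N≥1} closure(⋃_{n≥N} B_n). Then μ(Y) ≥ limsup_{n→∞} μ_n(B_n). -/
open MeasureTheory Filter Topology
open scoped ENNReal BoundedContinuousFunction

/-- Weak* convergence of measures on a metric space: `∫φ dμₙ → ∫φ dμ` for every bounded
continuous `φ : X → ℝ`. -/
def WeakTendstoB {X : Type*} [MetricSpace X] [MeasurableSpace X]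
    (μs : ℕ → Measure X) (μ : Measure X) : Prop :=
  ∀ φ : X →ᵇ ℝ, Tendsto (fun n => ∫ x, φ x ∂(μs n)) atTop (𝓝 (∫ x, φ x ∂μ))

/-- If Borel probability measures `μₙ` weak* converge to `μ` and `Bₙ` are Borel sets,
then `μ(⋂_{N≥1} closure(⋃_{n≥N} Bₙ)) ≥ limsup μₙ(Bₙ)`. -/
theorem measure_limsupSets_ge {X : Type*} [MetricSpace X]
    [MeasurableSpace X] [BorelSpace X]
    (μs : ℕ → Measure X) (μ : Measure X)
    (hμs : ∀ n, IsProbabilityMeasure (μs n)) (hμ : IsProbabilityMeasure μ)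
    (h : WeakTendstoB μs μ)
    (B : ℕ → Set X) (hB : ∀ n, MeasurableSet (B n)) :
    Filter.limsup (fun n => μs n (B n)) atTop ≤
      μ (⋂ N ∈ Set.Ici 1, closure (⋃ n ∈ Set.Ici N, B n)) := by
  set F : ℕ → Set X := fun N => closure (⋃ n ∈ Set.Ici N, B n) with hF
  have F_closed : ∀ N, IsClosed (F N) := fun N => isClosed_closure
  -- weak convergence as ProbabilityMeasure
  set P : ℕ → ProbabilityMeasure X := fun n => ⟨μs n, hμs n⟩ with hP
  set Q : ProbabilityMeasure X := ⟨μ, hμ⟩ with hQ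
  have hconv : Tendsto P atTop (𝓝 Q) :=
    ProbabilityMeasure.tendsto_iff_forall_integral_tendsto.mpr h
  -- limsup ≤ μ (F N) for each N
  have key : ∀ N, Filter.limsup (fun n => μs n (B n)) atTop ≤ μ (F N) := by
    intro N
    have h1 : Filter.limsup (fun n => μs n (B n)) atTop ≤
        Filter.limsup (fun n => μs n (F N)) atTop := by
      apply limsup_le_limsup
      · filter_upwards [eventually_ge_atTop N] with n hn
        exact measure_mono ((subset_closure.trans (by rfl)).trans' <|
          Set.subset_biUnion_of_mem hn)
      · isBoundedDefault
      · isBoundedDefault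
    exact h1.trans (ProbabilityMeasure.limsup_measure_closed_le_of_tendsto hconv (F_closed N))
  -- μ of the intersection is the infimum
  have hsub : (⋂ N ∈ Set.Ici 1, F N) = ⋂ N : ℕ, F (N + 1) := by
    apply Set.Subset.antisymm
    · exact Set.subset_iInter fun N =>
        Set.biInter_subset_of_mem (Nat.succ_le_succ (Nat.zero_le N))
    · refine Set.subset_iInter₂ fun N hN => ?_
      obtain ⟨M, rfl⟩ := Nat.exists_eq_add_of_le hN
      rw [Nat.add_comm 1 M]
      exact Set.iInter_subset _ M
  have anti : Antitone fun N : ℕ => F (N + 1) := by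
    intro a b hab
    apply closure_mono
    apply Set.biUnion_subset_biUnion_left
    exact fun n hn => le_trans (by omega : a + 1 ≤ b + 1) hn
  have := anti.measure_iInter (μ := μ) (fun N => (F_closed (N + 1)).measurableSet.nullMeasurableSet)
      ⟨0, measure_ne_top μ _⟩
  rw [hsub, this]
  exact le_iInf fun N => key (N + 1)
end

section
/- Let f be a homeomorphism of a compact metric space X, and let p_0, p_1, …, p_N be periodic points of f whose minimal periods are nondecreasing: π(p_0) ≤ π(p_1) ≤ ⋯ ≤ π(p_N). Suppose that for each 0 ≤ n < N the orbit Orb(p_{n+1}) is a (γ_n,κ_n)-good approximation of Orb(p_n), where γ_n > 0 and κ_n ∈ (0,1]. Then for each 1 ≤ n ≤ N, the orbit Orb(p_n) is a (Σ_{ℓ=0}^{n−1} γ_ℓ, ∏_{ℓ=0}^{n−1} κ_ℓ)-good approximation of Orb(p_0). -/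
open MeasureTheory Filter Topology Function
open scoped Classical

/-- The orbit `{p, f(p), …, f^{π(p)−1}(p)}` of a point under `f`, where `π(p)` is the
minimal period of `p`. -/
def orbit {X : Type*} (f : X → X) (p : X) : Set X :=
  (fun i => f^[i] p) '' Set.Iio (Function.minimalPeriod f p)

/-- `(S, ρ)` witnesses that the orbit of `q` is a `(γ,κ)`-good approximation of the
orbit of `p`. -/
def GoodApproxWitness {X : Type*} [MetricSpace X] (f : X → X) (γ κ : ℝ) (p q : X)
    (S : Finset X) (ρ : X → X) : Prop :=
  (↑S : Set X) ⊆ orbit f q ∧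
  (∀ x ∈ S, ρ x ∈ orbit f p) ∧
  κ < (S.card : ℝ) / (Function.minimalPeriod f q : ℝ) ∧
  (∀ x ∈ S, ∀ i < Function.minimalPeriod f p, dist (f^[i] x) (f^[i] (ρ x)) < γ) ∧
  (∀ y₁ ∈ orbit f p, ∀ y₂ ∈ orbit f p,
    (S.filter fun x => ρ x = y₁).card = (S.filter fun x => ρ x = y₂).card)

/-- The orbit of `q` is a `(γ,κ)`-good approximation of the orbit of `p`. -/
def GoodApprox {X : Type*} [MetricSpace X] (f : X → X) (γ κ : ℝ) (p q : X) : Prop :=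
  ∃ S ρ, GoodApproxWitness f γ κ p q S ρ

lemma goodApprox_comp {X : Type*} [MetricSpace X] (f : X → X) (γ₁ κ₁ γ₂ κ₂ : ℝ)
    (a b c : X) (hκ₁ : 0 < κ₁) (hκ₂ : 0 < κ₂)
    (hmono : Function.minimalPeriod f a ≤ Function.minimalPeriod f b)
    (h₁ : GoodApprox f γ₁ κ₁ a b) (h₂ : GoodApprox f γ₂ κ₂ b c) :
    GoodApprox f (γ₁ + γ₂) (κ₁ * κ₂) a c := by
  obtain ⟨S, ρ, hS_sub, hρ_orb, hS_card, hS_dist, hS_fib⟩ := h₁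
  obtain ⟨T, σ, hT_sub, hσ_orb, hT_card, hT_dist, hT_fib⟩ := h₂
  -- positivity of periods
  have hπc : 0 < Function.minimalPeriod f c := by
    by_contra h
    rw [Nat.pos_iff_ne_zero] at h; push_neg at h
    rw [h] at hT_card; simp at hT_card; linarith
  have hπb : 0 < Function.minimalPeriod f b := by
    by_contra h
    rw [Nat.pos_iff_ne_zero] at h; push_neg at h
    rw [h] at hS_card; simp at hS_card; linarith
  -- the orbit of b as a Finset
  set O : Finset X := (Finset.range (Function.minimalPeriod f b)).image (fun i => f^[i] b)
    with hO
  have hO_coe : (↑O : Set X) = orbit f b := by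
    ext x
    simp [hO, orbit, Set.mem_image]
  have hO_card : O.card = Function.minimalPeriod f b := by
    rw [hO, Finset.card_image_of_injOn, Finset.card_range]
    intro m hm n hn h
    exact Function.iterate_injOn_Iio_minimalPeriod (by simpa using hm) (by simpa using hn) h
  -- constant fiber size for σ
  have hb_mem : b ∈ orbit f b := ⟨0, hπb, rfl⟩
  set cst : ℕ := (T.filter fun x => σ x = b).card with hcst
  have hfib : ∀ y ∈ orbit f b, (T.filter fun x => σ x = y).card = cst := fun y hy =>
    hT_fib y hy b hb_mem
  -- T.card = π(b) * cst
  have hT_eq : T.card = Function.minimalPeriod f b * cst := by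
    have := Finset.card_eq_sum_card_fiberwise (f := σ) (s := T) (t := O)
      (fun x hx => by rw [hO_coe]; exact hσ_orb x hx)
    rw [this, ← hO_card, Finset.card_eq_sum_ones O, Finset.sum_mul, one_mul]
    exact Finset.sum_congr rfl fun y hy => hfib y (hO_coe ▸ Finset.mem_coe.2 hy)
  -- the composed witness set
  set U : Finset X := T.filter (fun x => σ x ∈ S) with hU
  have hU_fiber : ∀ s ∈ S, (U.filter fun x => σ x = s).card
      = (T.filter fun x => σ x = s).card := by
    intro s hs
    congr 1
    rw [hU, Finset.filter_filter]
    apply Finset.filter_congr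
    intro x _
    constructor
    · rintro ⟨_, h⟩; exact h
    · rintro h; exact ⟨h ▸ hs, h⟩
  have hU_card : U.card = S.card * cst := by
    have := Finset.card_eq_sum_card_fiberwise (f := σ) (s := U) (t := S)
      (fun x hx => (Finset.mem_filter.1 hx).2)
    rw [this, Finset.card_eq_sum_ones S, Finset.sum_mul, one_mul]
    refine Finset.sum_congr rfl fun s hs => ?_
    rw [hU_fiber s hs]
    exact hfib s (hS_sub hs)
  refine ⟨U, ρ ∘ σ, fun x hx => hT_sub (Finset.filter_subset _ _ hx), ?_, ?_, ?_, ?_⟩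
  · intro x hx
    exact hρ_orb (σ x) (Finset.mem_filter.1 hx).2
  · -- cardinality bound
    have hπb' : (0:ℝ) < (Function.minimalPeriod f b : ℝ) := by exact_mod_cast hπb
    have hπc' : (0:ℝ) < (Function.minimalPeriod f c : ℝ) := by exact_mod_cast hπc
    have h1 : κ₁ * κ₂ < ((S.card : ℝ) / (Function.minimalPeriod f b : ℝ)) *
        ((T.card : ℝ) / (Function.minimalPeriod f c : ℝ)) :=
      mul_lt_mul'' hS_card hT_card hκ₁.le hκ₂.le
    have h2 : ((S.card : ℝ) / (Function.minimalPeriod f b : ℝ)) *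
        ((T.card : ℝ) / (Function.minimalPeriod f c : ℝ))
        = (U.card : ℝ) / (Function.minimalPeriod f c : ℝ) := by
      rw [hU_card, hT_eq]
      push_cast
      field_simp
    linarith [h1, h2.symm ▸ h1]
  · -- distances
    intro x hx i hi
    have hxT : x ∈ T := Finset.filter_subset _ _ hx
    have hσS : σ x ∈ S := (Finset.mem_filter.1 hx).2
    calc dist (f^[i] x) (f^[i] ((ρ ∘ σ) x))
        ≤ dist (f^[i] x) (f^[i] (σ x)) + dist (f^[i] (σ x)) (f^[i] (ρ (σ x))) :=
          dist_triangle _ _ _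
      _ < γ₂ + γ₁ := add_lt_add (hT_dist x hxT i (lt_of_lt_of_le hi hmono))
          (hS_dist (σ x) hσS i hi)
      _ = γ₁ + γ₂ := by ring
  · -- equidistribution
    have key : ∀ y ∈ orbit f a,
        (U.filter fun x => (ρ ∘ σ) x = y).card = (S.filter fun s => ρ s = y).card * cst := by
      intro y hy
      have := Finset.card_eq_sum_card_fiberwise (f := σ)
        (s := U.filter fun x => (ρ ∘ σ) x = y) (t := S.filter fun s => ρ s = y)
        (fun x hx => by
          have h1 := Finset.mem_filter.1 hx
          have h2 := Finset.mem_filter.1 h1.1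
          exact Finset.mem_filter.2 ⟨h2.2, h1.2⟩)
      rw [this, Finset.card_eq_sum_ones (S.filter fun s => ρ s = y), Finset.sum_mul, one_mul]
      refine Finset.sum_congr rfl fun s hs => ?_
      have hsS := Finset.mem_filter.1 hs
      have : ((U.filter fun x => (ρ ∘ σ) x = y).filter fun x => σ x = s)
          = T.filter fun x => σ x = s := by
        rw [hU, Finset.filter_filter, Finset.filter_filter]
        apply Finset.filter_congr
        intro x _
        constructor
        · rintro ⟨_, _, h⟩; exact h
        · rintro h; exact ⟨h ▸ hsS.1, by simp [h, hsS.2], h⟩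
      rw [this]
      exact hfib s (hS_sub hsS.1)
    intro y₁ hy₁ y₂ hy₂
    rw [key y₁ hy₁, key y₂ hy₂, hS_fib y₁ hy₁ y₂ hy₂]

/-- Transitivity of good approximations along a chain of periodic orbits with
nondecreasing minimal periods: `Orb(pₙ)` is a
`(Σ_{ℓ<n} γ_ℓ, ∏_{ℓ<n} κ_ℓ)`-good approximation of `Orb(p₀)`. -/
theorem goodApprox_trans_chain {X : Type*} [MetricSpace X] [CompactSpace X]
    (f : X ≃ₜ X) (N : ℕ) (p : ℕ → X) (γ κ : ℕ → ℝ)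
    (hp : ∀ n ≤ N, p n ∈ Function.periodicPts ⇑f)
    (hmono : ∀ n < N,
      Function.minimalPeriod ⇑f (p n) ≤ Function.minimalPeriod ⇑f (p (n + 1)))
    (hγ : ∀ n < N, 0 < γ n)
    (hκ : ∀ n < N, 0 < κ n ∧ κ n ≤ 1)
    (happ : ∀ n < N, GoodApprox ⇑f (γ n) (κ n) (p n) (p (n + 1))) :
    ∀ n, 1 ≤ n → n ≤ N →
      GoodApprox ⇑f (∑ ℓ ∈ Finset.range n, γ ℓ) (∏ ℓ ∈ Finset.range n, κ ℓ)
        (p 0) (p n) := by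
  have hmono0 : ∀ k, k ≤ N →
      Function.minimalPeriod ⇑f (p 0) ≤ Function.minimalPeriod ⇑f (p k) := by
    intro k
    induction k with
    | zero => intro _; exact le_refl _
    | succ m ih =>
      intro h
      exact le_trans (ih (by omega)) (hmono m (by omega))
  intro n
  induction n with
  | zero => intro h; omega
  | succ m ih =>
    intro hn1 hnN
    rcases Nat.eq_or_lt_of_le hn1 with h1 | h1
    · have hm : m = 0 := by omega
      subst hm
      simpa using happ 0 (by omega)
    · have hm1 : 1 ≤ m := by omega
      have hmlt : m < N := by omega
      have base := ih hm1 (by omega)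
      rw [Finset.sum_range_succ, Finset.prod_range_succ]
      have hκprod : 0 < ∏ ℓ ∈ Finset.range m, κ ℓ :=
        Finset.prod_pos fun ℓ hℓ => (hκ ℓ (by simp only [Finset.mem_range] at hℓ; omega)).1
      exact goodApprox_comp (⇑f) _ _ _ _ _ _ _ hκprod (hκ m hmlt).1
        (hmono0 m (by omega)) base (happ m hmlt)
end

section
/- Let f be a homeomorphism of a compact metric space X, and let p, q be periodic points of f such that Orb(q) is a (γ,κ)-good approximation of Orb(p), where γ > 0 and κ ∈ (0,1]. Let φ : X → ℝ be continuous, let K ≥ 0 satisfy |φ(x)| ≤ K for all x ∈ X, and let ε > 0 be such that |φ(x) − φ(y)| < ε whenever d(x,y) < γ. Then |∫φ dμ_q − ∫φ dμ_p| < ε + 2K(1−κ). -/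
open MeasureTheory Filter Topology Function
open scoped Classical ENNReal

/-- The periodic measure `μ_p = (1/π(p)) Σ_{i<π(p)} δ_{f^i(p)}`. -/
noncomputable def periodicMeasure {X : Type*} [MeasurableSpace X] (f : X → X) (p : X) :
    Measure X :=
  (Function.minimalPeriod f p : ℝ≥0∞)⁻¹ •
    ∑ i ∈ Finset.range (Function.minimalPeriod f p), Measure.dirac (f^[i] p)

/-!
Write `A` for the `π(p)`-step Birkhoff average of `φ`. Along a periodic orbit the Birkhoff sum over
a full period does not depend on the starting point, so `∫ φ dμ_p = A y` for every `y ∈ Orb(p)`,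
and exchanging the two sums gives `∫ φ dμ_q = (1/π(q)) ∑_{x ∈ Orb(q)} A x`. Hence
`∫ φ dμ_q - ∫ φ dμ_p` is the mean over `x ∈ Orb(q)` of `A x - A (ρ x)`, which is `< ε` on the
good set (the orbit segments of `x` and `ρ x` stay `γ`-close) and at most `2K` on the rest,
whose proportion is `< 1 - κ`.
-/

open Finset

namespace Function.IsPeriodicPt

variable {α G : Type*} [AddCommGroup G] {f : α → α} {m : ℕ} {x : α}

theorem birkhoffSum_apply_iterate (h : IsPeriodicPt f m x) (g : α → G) (k : ℕ) :
    birkhoffSum f g m (f^[k] x) = birkhoffSum f g m x := by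
  induction k with
  | zero => rfl
  | succ k ih =>
    rw [iterate_succ_apply', ← ih, ← sub_eq_zero, birkhoffSum_apply_sub_birkhoffSum,
      (h.apply_iterate k).eq, sub_self]

theorem sum_birkhoffSum_iterate (h : IsPeriodicPt f m x) (g : α → G) (n : ℕ) :
    ∑ j ∈ range m, birkhoffSum f g n (f^[j] x) = n • birkhoffSum f g m x := by
  simp only [birkhoffSum]
  rw [sum_comm]
  refine (sum_congr rfl fun k _ => ?_).trans (by rw [sum_const, card_range])
  simp_rw [← iterate_add_apply, add_comm k, iterate_add_apply]
  exact h.birkhoffSum_apply_iterate g k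

end Function.IsPeriodicPt

section periodicMeasure

variable {X : Type*} [MeasurableSpace X] [MeasurableSingletonClass X] (f : X → X) (g : X → ℝ)

theorem integral_periodicMeasure (p : X) :
    ∫ x, g x ∂periodicMeasure f p = birkhoffAverage ℝ f g (minimalPeriod f p) p := by
  rw [periodicMeasure, integral_smul_measure,
    integral_finsetSum_measure fun _ _ => integrable_dirac enorm_lt_top]
  simp [birkhoffAverage, birkhoffSum, integral_dirac, ENNReal.toReal_inv]

theorem integral_periodicMeasure_eq_birkhoffAverage_of_mem_orbit {p y : X} (hy : y ∈ orbit f p) :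
    ∫ x, g x ∂periodicMeasure f p = birkhoffAverage ℝ f g (minimalPeriod f p) y := by
  obtain ⟨k, -, rfl⟩ := hy
  rw [integral_periodicMeasure, birkhoffAverage, birkhoffAverage,
    (isPeriodicPt_minimalPeriod f p).birkhoffSum_apply_iterate]

theorem integral_periodicMeasure_eq_sum_birkhoffAverage_div {n : ℕ} (hn : n ≠ 0) (q : X) :
    ∫ x, g x ∂periodicMeasure f q =
      (∑ j ∈ range (minimalPeriod f q), birkhoffAverage ℝ f g n (f^[j] q)) /
        minimalPeriod f q := by
  simp only [integral_periodicMeasure, birkhoffAverage, smul_eq_mul, ← mul_sum,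
    (isPeriodicPt_minimalPeriod f q).sum_birkhoffSum_iterate, nsmul_eq_mul]
  field_simp

end periodicMeasure

section birkhoffAverage

variable {α E : Type*} [NormedAddCommGroup E] [NormedSpace ℝ E] {f : α → α} {g : α → E}
  {n : ℕ} {x y : α} {C : ℝ}

theorem dist_birkhoffAverage_birkhoffAverage_lt (hn : n ≠ 0)
    (h : ∀ k < n, dist (g (f^[k] x)) (g (f^[k] y)) < C) :
    dist (birkhoffAverage ℝ f g n x) (birkhoffAverage ℝ f g n y) < C := by
  have hn' : (0 : ℝ) < n := by positivity
  refine (dist_birkhoffAverage_birkhoffAverage_le ℝ f g n x y).trans_lt ?_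
  rw [div_lt_iff₀ hn']
  calc ∑ k ∈ range n, dist (g (f^[k] x)) (g (f^[k] y))
      < ∑ _k ∈ range n, C := sum_lt_sum_of_nonempty (nonempty_range_iff.2 hn) fun k hk =>
        h k (mem_range.1 hk)
    _ = C * n := by simp [mul_comm]

theorem dist_birkhoffAverage_birkhoffAverage_le_of_forall_le (hn : n ≠ 0)
    (h : ∀ k < n, dist (g (f^[k] x)) (g (f^[k] y)) ≤ C) :
    dist (birkhoffAverage ℝ f g n x) (birkhoffAverage ℝ f g n y) ≤ C := by
  have hn' : (0 : ℝ) < n := by positivity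
  refine (dist_birkhoffAverage_birkhoffAverage_le ℝ f g n x y).trans ?_
  rw [div_le_iff₀ hn']
  calc ∑ k ∈ range n, dist (g (f^[k] x)) (g (f^[k] y))
      ≤ ∑ _k ∈ range n, C := sum_le_sum fun k hk => h k (mem_range.1 hk)
    _ = C * n := by simp [mul_comm]

end birkhoffAverage

theorem card_filter_range_iterate_mem {α : Type*} {f : α → α} {q : α} {S : Finset α}
    (hS : ↑S ⊆ orbit f q) :
    #{j ∈ range (minimalPeriod f q) | f^[j] q ∈ S} = #S := by
  refine card_bij (fun j _ => f^[j] q) (fun j hj => (mem_filter.1 hj).2)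
    (fun i hi j hj hij => iterate_injOn_Iio_minimalPeriod ?_ ?_ hij) fun x hx => ?_
  · simpa using (mem_filter.1 hi).1
  · simpa using (mem_filter.1 hj).1
  · obtain ⟨j, hj, rfl⟩ := hS hx
    exact ⟨j, by simpa [hx] using hj, rfl⟩

theorem Finset.abs_sum_lt_of_subset {ι : Type*} [DecidableEq ι] {s t : Finset ι} (hts : t ⊆ s)
    (ht : t.Nonempty) {d : ι → ℝ} {ε M : ℝ}
    (hε : ∀ i ∈ t, |d i| < ε) (hM : ∀ i ∈ s \ t, |d i| ≤ M) :
    |∑ i ∈ s, d i| < #t * ε + #(s \ t) * M := by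
  rw [← sum_sdiff hts]
  calc |∑ i ∈ s \ t, d i + ∑ i ∈ t, d i|
      ≤ ∑ i ∈ s \ t, |d i| + ∑ i ∈ t, |d i| :=
        (abs_add_le _ _).trans (add_le_add (abs_sum_le_sum_abs _ _) (abs_sum_le_sum_abs _ _))
    _ < #(s \ t) * M + #t * ε := by
        refine add_lt_add_of_le_of_lt ?_ ?_
        · simpa using sum_le_sum hM
        · simpa using sum_lt_sum_of_nonempty ht hε
    _ = #t * ε + #(s \ t) * M := add_comm _ _

theorem GoodApproxWitness.abs_integral_sub_lt {X : Type*} [MetricSpace X] [MeasurableSpace X]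
    [MeasurableSingletonClass X] {f : X → X} {γ κ : ℝ} {p q : X} {S : Finset X} {ρ : X → X}
    (hw : GoodApproxWitness f γ κ p q S ρ) (hp : p ∈ periodicPts f) (hS : S.Nonempty)
    {φ : X → ℝ} {K ε : ℝ} (hK : ∀ x, |φ x| ≤ K)
    (hmod : ∀ x y : X, dist x y < γ → |φ x - φ y| < ε) :
    |∫ x, φ x ∂periodicMeasure f q - ∫ x, φ x ∂periodicMeasure f p| <
      (#S * ε + (minimalPeriod f q - #S) * (2 * K)) / minimalPeriod f q := by
  obtain ⟨hSq, hρ, -, hdist, -⟩ := hw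
  set m := minimalPeriod f q
  set I := ∫ x, φ x ∂periodicMeasure f p with hI
  set A := birkhoffAverage ℝ f φ (minimalPeriod f p)
  have hn : minimalPeriod f p ≠ 0 := (minimalPeriod_pos_of_mem_periodicPts hp).ne'
  set T := {j ∈ range m | f^[j] q ∈ S}
  have hT : #T = #S := card_filter_range_iterate_mem hSq
  have hTm : T ⊆ range m := filter_subset _ _
  have hTne : T.Nonempty := by rw [← card_pos, hT]; exact hS.card_pos
  have hm : (0 : ℝ) < m := by exact_mod_cast card_range m ▸ card_pos.2 (hTne.mono hTm)
  have hnear : ∀ j ∈ T, |A (f^[j] q) - I| < ε := by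
    intro j hj
    have hx := (mem_filter.1 hj).2
    rw [hI, integral_periodicMeasure_eq_birkhoffAverage_of_mem_orbit f φ (hρ _ hx), ← Real.dist_eq]
    exact dist_birkhoffAverage_birkhoffAverage_lt hn fun k hk =>
      (Real.dist_eq _ _).trans_lt (hmod _ _ (hdist _ hx k hk))
  have hfar : ∀ j ∈ range m \ T, |A (f^[j] q) - I| ≤ 2 * K := by
    intro j _
    rw [hI, integral_periodicMeasure f φ p, ← Real.dist_eq]
    refine dist_birkhoffAverage_birkhoffAverage_le_of_forall_le hn fun k _ => ?_
    rw [Real.dist_eq]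
    linarith [abs_sub (φ (f^[k] (f^[j] q))) (φ (f^[k] p)), hK (f^[k] (f^[j] q)), hK (f^[k] p)]
  have hsum : (∑ j ∈ range m, A (f^[j] q)) / m - I = (∑ j ∈ range m, (A (f^[j] q) - I)) / m := by
    rw [sum_sub_distrib, sum_const, card_range, nsmul_eq_mul]
    field_simp
  rw [integral_periodicMeasure_eq_sum_birkhoffAverage_div f φ hn q, hsum, abs_div, abs_of_pos hm,
    div_lt_div_iff_of_pos_right hm]
  calc |∑ j ∈ range m, (A (f^[j] q) - I)| < #T * ε + #(range m \ T) * (2 * K) :=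
        abs_sum_lt_of_subset hTm hTne hnear hfar
    _ = #S * ε + (m - #S) * (2 * K) := by
        rw [card_sdiff_of_subset hTm, card_range, Nat.cast_sub (card_range m ▸ card_le_card hTm),
          hT]

theorem integral_periodicMeasure_close_general {X : Type*} [MetricSpace X]
    [MeasurableSpace X] [BorelSpace X]
    (f : X ≃ₜ X) (p q : X) (γ κ : ℝ)
    (hp : p ∈ Function.periodicPts ⇑f) (hq : q ∈ Function.periodicPts ⇑f)
    (hκ0 : 0 < κ)
    (happ : GoodApprox ⇑f γ κ p q)
    (φ : C(X, ℝ)) (K : ℝ) (hK0 : 0 ≤ K) (hK : ∀ x, |φ x| ≤ K)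
    (ε : ℝ) (hε : 0 < ε) (hmod : ∀ x y : X, dist x y < γ → |φ x - φ y| < ε) :
    |(∫ x, φ x ∂(periodicMeasure ⇑f q)) - ∫ x, φ x ∂(periodicMeasure ⇑f p)| <
      ε + 2 * K * (1 - κ) := by
  obtain ⟨S, ρ, hw⟩ := happ
  set m := minimalPeriod f q
  have hm : (0 : ℝ) < m := Nat.cast_pos.2 (minimalPeriod_pos_of_mem_periodicPts hq)
  have hκS : κ < #S / m := hw.2.2.1
  have hSm : (#S : ℝ) ≤ m := by
    rw [← card_filter_range_iterate_mem hw.1]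
    exact_mod_cast (card_filter_le _ _).trans (card_range m).le
  have hS : S.Nonempty :=
    card_pos.1 (by exact_mod_cast (div_pos_iff_of_pos_right hm).1 (hκ0.trans hκS))
  calc _ < (#S * ε + (m - #S) * (2 * K)) / m := hw.abs_integral_sub_lt hp hS hK hmod
    _ = #S / m * ε + (1 - #S / m) * (2 * K) := by field_simp
    _ ≤ ε + 2 * K * (1 - κ) := by
      have hε' : #S / m * ε ≤ ε := mul_le_of_le_one_left hε.le ((div_le_one hm).2 hSm)
      have hK' : (1 - #S / m) * (2 * K) ≤ (1 - κ) * (2 * K) :=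
        mul_le_mul_of_nonneg_right (by linarith) (by positivity)
      linarith

/-- If `Orb(q)` is a `(γ,κ)`-good approximation of `Orb(p)`, `|φ| ≤ K`, and `φ` has
oscillation `< ε` at scale `γ`, then `|∫φ dμ_q − ∫φ dμ_p| < ε + 2K(1−κ)`. -/
theorem integral_periodicMeasure_close {X : Type*} [MetricSpace X] [CompactSpace X]
    [MeasurableSpace X] [BorelSpace X]
    (f : X ≃ₜ X) (p q : X) (γ κ : ℝ)
    (hp : p ∈ Function.periodicPts ⇑f) (hq : q ∈ Function.periodicPts ⇑f)
    (hγ : 0 < γ) (hκ0 : 0 < κ) (hκ1 : κ ≤ 1)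
    (happ : GoodApprox ⇑f γ κ p q)
    (φ : C(X, ℝ)) (K : ℝ) (hK0 : 0 ≤ K) (hK : ∀ x, |φ x| ≤ K)
    (ε : ℝ) (hε : 0 < ε) (hmod : ∀ x y : X, dist x y < γ → |φ x - φ y| < ε) :
    |(∫ x, φ x ∂(periodicMeasure ⇑f q)) - ∫ x, φ x ∂(periodicMeasure ⇑f p)| <
      ε + 2 * K * (1 - κ) :=
  integral_periodicMeasure_close_general f p q γ κ hp hq hκ0 happ φ K hK0 hK ε hε hmod
end

section
/- Let f be a homeomorphism of a compact metric space X. Let (p_n) and (q_n) be sequences of periodic points of f such that for each n the orbit Orb(q_n) is a (γ_n,κ_n)-good approximation of Orb(p_n), where γ_n > 0, κ_n ∈ (0,1], γ_n → 0 and κ_n → 1. If the periodic measures μ_{p_n} converge in the weak* topology to a Borel probability measure μ, then the periodic measures μ_{q_n} also converge in the weak* topology to μ. -/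
set_option linter.unusedSectionVars false
set_option linter.unusedVariables false


open MeasureTheory Filter Topology Function
open scoped Classical ENNReal

/-- Weak* convergence of measures: `∫φ dμₙ → ∫φ dμ` for every continuous `φ : X → ℝ`. -/
def WeakTendstoC {X : Type*} [TopologicalSpace X] [MeasurableSpace X]
    (μs : ℕ → Measure X) (μ : Measure X) : Prop :=
  ∀ φ : C(X, ℝ), Tendsto (fun n => ∫ x, φ x ∂(μs n)) atTop (𝓝 (∫ x, φ x ∂μ))

section Aux

variable {X : Type*} [MetricSpace X] [CompactSpace X] [MeasurableSpace X] [BorelSpace X]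

/-- The orbit as a `Finset`. -/
noncomputable def orbFin (f : X → X) (p : X) : Finset X :=
  (Finset.range (Function.minimalPeriod f p)).image (fun i => f^[i] p)

lemma coe_orbFin (f : X → X) (p : X) : (↑(orbFin f p) : Set X) = orbit f p := by
  simp [orbFin, orbit]

lemma card_orbFin (f : X → X) (p : X) :
    (orbFin f p).card = Function.minimalPeriod f p := by
  rw [orbFin, Finset.card_image_of_injOn, Finset.card_range]
  intro m hm n hn h
  exact Function.iterate_injOn_Iio_minimalPeriod (by simpa using hm) (by simpa using hn) h

lemma mem_orbFin_iterate (f : X → X) (p : X) (hp : p ∈ Function.periodicPts f) (n : ℕ) :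
    f^[n] p ∈ orbFin f p := by
  rw [← Function.iterate_mod_minimalPeriod_eq]
  exact Finset.mem_image_of_mem _ (Finset.mem_range.mpr
    (Nat.mod_lt _ (Function.minimalPeriod_pos_of_mem_periodicPts hp)))

lemma image_iterate_orbFin {f : X → X} (hf : Function.Injective f) (p : X)
    (hp : p ∈ Function.periodicPts f) (i : ℕ) :
    (orbFin f p).image (f^[i]) = orbFin f p := by
  apply Finset.eq_of_subset_of_card_le
  · intro z hz
    obtain ⟨w, hw, rfl⟩ := Finset.mem_image.mp hz
    obtain ⟨j, _, rfl⟩ := Finset.mem_image.mp hw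
    rw [← Function.iterate_add_apply]
    exact mem_orbFin_iterate f p hp _
  · rw [Finset.card_image_of_injective _ (hf.iterate i)]

lemma sum_orbFin_iterate {f : X → X} (hf : Function.Injective f) (p : X)
    (hp : p ∈ Function.periodicPts f) (i : ℕ) (φ : X → ℝ) :
    ∑ z ∈ orbFin f p, φ (f^[i] z) = ∑ z ∈ orbFin f p, φ z := by
  rw [← Finset.sum_image (fun x _ y _ h => hf.iterate i h), image_iterate_orbFin hf p hp i]

lemma sum_orbFin_avg {f : X → X} (hf : Function.Injective f) (p : X)
    (hp : p ∈ Function.periodicPts f) {m : ℕ} (hm : 0 < m) (φ : X → ℝ) :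
    ∑ y ∈ orbFin f p, (m : ℝ)⁻¹ * ∑ i ∈ Finset.range m, φ (f^[i] y)
      = ∑ z ∈ orbFin f p, φ z := by
  have hm' : ((m : ℝ)) ≠ 0 := by exact_mod_cast hm.ne'
  rw [← Finset.mul_sum, Finset.sum_comm]
  rw [Finset.sum_congr rfl fun i _ => sum_orbFin_iterate hf p hp i φ]
  rw [Finset.sum_const, Finset.card_range, nsmul_eq_mul]
  field_simp

lemma integral_periodicMeasure_s5 (f : X → X) (p : X) (φ : C(X, ℝ)) :
    ∫ x, φ x ∂(periodicMeasure f p)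
      = ((Function.minimalPeriod f p : ℝ))⁻¹ *
        ∑ i ∈ Finset.range (Function.minimalPeriod f p), φ (f^[i] p) := by
  have hint : ∀ i ∈ Finset.range (Function.minimalPeriod f p),
      Integrable (fun x => φ x) (Measure.dirac (f^[i] p)) := fun i _ =>
    φ.continuous.integrable_of_hasCompactSupport (HasCompactSupport.of_compactSpace _)
  rw [periodicMeasure, integral_smul_measure, integral_finset_sum_measure hint]
  simp [integral_dirac, ENNReal.toReal_inv, smul_eq_mul]

lemma integral_periodicMeasure' {f : X → X} (hf : Function.Injective f) (p : X)
    (hp : p ∈ Function.periodicPts f) (φ : C(X, ℝ)) :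
    ∫ x, φ x ∂(periodicMeasure f p)
      = ((Function.minimalPeriod f p : ℝ))⁻¹ * ∑ z ∈ orbFin f p, φ z := by
  rw [integral_periodicMeasure_s5 f p φ, orbFin,
    Finset.sum_image (fun m hm n hn h => Function.iterate_injOn_Iio_minimalPeriod
      (by simpa using hm) (by simpa using hn) h)]

lemma real_estB {a b B D M κ : ℝ} (ha : 0 < a) (hb : 0 < b) (hab : a ≤ b)
    (hκ : κ < a / b) (hM : 0 ≤ M) (hBb : |B| ≤ a * M) (hDb : |D| ≤ (b - a) * M) :
    |b⁻¹ * (D + B) - a⁻¹ * B| ≤ 2 * M * (1 - κ) := by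
  have ha0 : a ≠ 0 := ne_of_gt ha
  have hb0 : b ≠ 0 := ne_of_gt hb
  have hinv : b⁻¹ ≤ a⁻¹ := inv_anti₀ ha hab
  have hrw : b⁻¹ * (D + B) - a⁻¹ * B = b⁻¹ * D + (b⁻¹ - a⁻¹) * B := by ring
  rw [hrw]
  calc |b⁻¹ * D + (b⁻¹ - a⁻¹) * B| ≤ |b⁻¹ * D| + |(b⁻¹ - a⁻¹) * B| := abs_add_le _ _
    _ ≤ b⁻¹ * ((b - a) * M) + (a⁻¹ - b⁻¹) * (a * M) := by
        apply add_le_add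
        · rw [abs_mul, abs_of_nonneg (inv_nonneg.mpr hb.le)]
          exact mul_le_mul_of_nonneg_left hDb (inv_nonneg.mpr hb.le)
        · rw [abs_mul, abs_of_nonpos (by linarith), neg_sub]
          exact mul_le_mul_of_nonneg_left hBb (by linarith)
    _ = 2 * M * (1 - a / b) := by field_simp; ring
    _ ≤ 2 * M * (1 - κ) := by nlinarith

lemma key_estimate {f : X → X} (hfi : Function.Injective f) {p q : X}
    (hp : p ∈ Function.periodicPts f) (hq : q ∈ Function.periodicPts f)
    {γ κ : ℝ} (hκpos : 0 < κ) {S : Finset X} {ρ : X → X}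
    (hw : GoodApproxWitness f γ κ p q S ρ)
    (φ : C(X, ℝ)) {M ε : ℝ} (hM : ∀ x, |φ x| ≤ M)
    (hmod : ∀ a b : X, dist a b < γ → |φ a - φ b| ≤ ε) :
    |(∫ x, φ x ∂(periodicMeasure f q)) - ∫ x, φ x ∂(periodicMeasure f p)|
      ≤ ε + 2 * M * (1 - κ) := by
  obtain ⟨hS_sub, hρ, hκS, hdist, hfib⟩ := hw
  have hπp : 0 < Function.minimalPeriod f p :=
    Function.minimalPeriod_pos_of_mem_periodicPts hp
  have hπq : 0 < Function.minimalPeriod f q :=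
    Function.minimalPeriod_pos_of_mem_periodicPts hq
  set πp := Function.minimalPeriod f p with hπpdef
  set πq := Function.minimalPeriod f q with hπqdef
  have hπpR : (0 : ℝ) < (πp : ℝ) := by exact_mod_cast hπp
  have hπqR : (0 : ℝ) < (πq : ℝ) := by exact_mod_cast hπq
  have hM0 : 0 ≤ M := (abs_nonneg _).trans (hM p)
  set T := orbFin f p with hTdef
  set Tq := orbFin f q with hTqdef
  set g : X → ℝ := fun x => (πp : ℝ)⁻¹ * ∑ i ∈ Finset.range πp, φ (f^[i] x) with hgdef
  -- g is bounded by M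
  have hgM : ∀ x, |g x| ≤ M := by
    intro x
    have h1 : |∑ i ∈ Finset.range πp, φ (f^[i] x)| ≤ (πp : ℝ) * M :=
      calc |∑ i ∈ Finset.range πp, φ (f^[i] x)|
          ≤ ∑ i ∈ Finset.range πp, |φ (f^[i] x)| := Finset.abs_sum_le_sum_abs _ _
        _ ≤ ∑ _i ∈ Finset.range πp, M := Finset.sum_le_sum fun i _ => hM _
        _ = (πp : ℝ) * M := by simp [mul_comm]
    have : |g x| = (πp : ℝ)⁻¹ * |∑ i ∈ Finset.range πp, φ (f^[i] x)| := by
      rw [hgdef]; simp [abs_mul, abs_of_nonneg (inv_nonneg.mpr hπpR.le)]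
    rw [this]
    calc (πp : ℝ)⁻¹ * |∑ i ∈ Finset.range πp, φ (f^[i] x)|
        ≤ (πp : ℝ)⁻¹ * ((πp : ℝ) * M) := by
          exact mul_le_mul_of_nonneg_left h1 (inv_nonneg.mpr hπpR.le)
      _ = M := by field_simp
  -- basic cardinalities
  have hT_card : T.card = πp := card_orbFin f p
  have hTq_card : Tq.card = πq := card_orbFin f q
  have hS_subTq : S ⊆ Tq := by
    rw [← Finset.coe_subset, coe_orbFin]; exact hS_sub
  have hpT : p ∈ orbit f p := ⟨0, hπp, by simp⟩
  set c := (S.filter fun x => ρ x = p).card with hcdef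
  have hmemT : ∀ y ∈ T, y ∈ orbit f p := by
    intro y hy
    have : y ∈ (↑T : Set X) := hy
    rwa [hTdef, coe_orbFin] at this
  have hfib' : ∀ y ∈ T, (S.filter fun x => ρ x = y).card = c :=
    fun y hy => hfib y (hmemT y hy) p hpT
  have hmaps : ∀ x ∈ S, ρ x ∈ T := by
    intro x hx
    rw [← Finset.mem_coe, hTdef, coe_orbFin]
    exact hρ x hx
  have hS_card : S.card = πp * c := by
    rw [Finset.card_eq_sum_card_fiberwise hmaps, Finset.sum_congr rfl hfib',
      Finset.sum_const, hT_card, smul_eq_mul]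
  have hS_pos : 0 < S.card := by
    rcases Nat.eq_zero_or_pos S.card with h0 | h
    · rw [h0] at hκS; norm_num at hκS; linarith
    · exact h
  have hsR : (0 : ℝ) < (S.card : ℝ) := by exact_mod_cast hS_pos
  have hc_pos : 0 < c := by
    rcases Nat.eq_zero_or_pos c with h0 | h
    · rw [h0, Nat.mul_zero] at hS_card; omega
    · exact h
  have hcR : (0 : ℝ) < (c : ℝ) := by exact_mod_cast hc_pos
  -- sums of g
  have hsum_ρ : ∑ x ∈ S, g (ρ x) = (c : ℝ) * ∑ y ∈ T, g y := by
    rw [← Finset.sum_fiberwise_of_maps_to' hmaps g]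
    rw [Finset.sum_congr rfl fun y hy => by
      rw [Finset.sum_const, hfib' y hy, nsmul_eq_mul]]
    rw [Finset.mul_sum]
  have hsum_T_g : ∑ y ∈ T, g y = ∑ z ∈ T, φ z := sum_orbFin_avg hfi p hp hπp φ
  have hsum_Tq_g : ∑ y ∈ Tq, g y = ∑ z ∈ Tq, φ z := sum_orbFin_avg hfi q hq hπp φ
  -- integrals
  have hIp : ∫ x, φ x ∂(periodicMeasure f p) = (πp : ℝ)⁻¹ * ∑ z ∈ T, φ z :=
    integral_periodicMeasure' hfi p hp φ
  have hIq : ∫ x, φ x ∂(periodicMeasure f q) = (πq : ℝ)⁻¹ * ∑ z ∈ Tq, φ z :=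
    integral_periodicMeasure' hfi q hq φ
  set A := ((S.card : ℝ))⁻¹ * ∑ x ∈ S, g x with hAdef
  -- Step A : |A - ∫ φ dμ_p| ≤ ε
  have hstepA : |A - ∫ x, φ x ∂(periodicMeasure f p)| ≤ ε := by
    have hrw : A - ∫ x, φ x ∂(periodicMeasure f p)
        = ((S.card : ℝ))⁻¹ * ∑ x ∈ S, (g x - g (ρ x)) := by
      rw [hIp, hAdef, Finset.sum_sub_distrib, mul_sub, hsum_ρ, hsum_T_g]
      have hScardR : (S.card : ℝ) = (πp : ℝ) * (c : ℝ) := by exact_mod_cast hS_card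
      rw [hScardR]
      field_simp
    rw [hrw]
    have hterm : ∀ x ∈ S, |g x - g (ρ x)| ≤ ε := by
      intro x hx
      have h1 : |∑ i ∈ Finset.range πp, (φ (f^[i] x) - φ (f^[i] (ρ x)))| ≤ (πp : ℝ) * ε :=
        calc |∑ i ∈ Finset.range πp, (φ (f^[i] x) - φ (f^[i] (ρ x)))|
            ≤ ∑ i ∈ Finset.range πp, |φ (f^[i] x) - φ (f^[i] (ρ x))| :=
              Finset.abs_sum_le_sum_abs _ _
          _ ≤ ∑ _i ∈ Finset.range πp, ε := Finset.sum_le_sum fun i hi =>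
              hmod _ _ (hdist x hx i (Finset.mem_range.mp hi))
          _ = (πp : ℝ) * ε := by simp [mul_comm]
      have h2 : g x - g (ρ x)
          = (πp : ℝ)⁻¹ * ∑ i ∈ Finset.range πp, (φ (f^[i] x) - φ (f^[i] (ρ x))) := by
        rw [hgdef]; simp [Finset.sum_sub_distrib, mul_sub]
      rw [h2, abs_mul, abs_of_nonneg (inv_nonneg.mpr hπpR.le)]
      calc (πp : ℝ)⁻¹ * |∑ i ∈ Finset.range πp, (φ (f^[i] x) - φ (f^[i] (ρ x)))|
          ≤ (πp : ℝ)⁻¹ * ((πp : ℝ) * ε) :=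
            mul_le_mul_of_nonneg_left h1 (inv_nonneg.mpr hπpR.le)
        _ = ε := by field_simp
    calc |((S.card : ℝ))⁻¹ * ∑ x ∈ S, (g x - g (ρ x))|
        = ((S.card : ℝ))⁻¹ * |∑ x ∈ S, (g x - g (ρ x))| := by
          rw [abs_mul, abs_of_nonneg (inv_nonneg.mpr hsR.le)]
      _ ≤ ((S.card : ℝ))⁻¹ * ((S.card : ℝ) * ε) := by
          refine mul_le_mul_of_nonneg_left ?_ (inv_nonneg.mpr hsR.le)
          calc |∑ x ∈ S, (g x - g (ρ x))| ≤ ∑ x ∈ S, |g x - g (ρ x)| :=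
                Finset.abs_sum_le_sum_abs _ _
            _ ≤ ∑ _x ∈ S, ε := Finset.sum_le_sum hterm
            _ = (S.card : ℝ) * ε := by simp [mul_comm]
      _ = ε := by field_simp
  -- Step B : |∫ φ dμ_q - A| ≤ 2 M (1 - κ)
  have hstepB : |(∫ x, φ x ∂(periodicMeasure f q)) - A| ≤ 2 * M * (1 - κ) := by
    have hab : ((S.card : ℝ)) ≤ ((πq : ℝ)) := by
      rw [← hTq_card]
      exact_mod_cast Finset.card_le_card hS_subTq
    set B := ∑ x ∈ S, g x with hBdef
    set D := ∑ x ∈ Tq \ S, g x with hDdef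
    have hsplit : ∑ y ∈ Tq, g y = D + B := (Finset.sum_sdiff hS_subTq).symm
    have hBb : |B| ≤ (S.card : ℝ) * M :=
      calc |B| ≤ ∑ x ∈ S, |g x| := Finset.abs_sum_le_sum_abs _ _
        _ ≤ ∑ _x ∈ S, M := Finset.sum_le_sum fun x _ => hgM x
        _ = (S.card : ℝ) * M := by simp [mul_comm]
    have hDb : |D| ≤ ((πq : ℝ) - (S.card : ℝ)) * M := by
      calc |D| ≤ ∑ x ∈ Tq \ S, |g x| := Finset.abs_sum_le_sum_abs _ _
        _ ≤ ∑ _x ∈ Tq \ S, M := Finset.sum_le_sum fun x _ => hgM x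
        _ = (((Tq \ S).card : ℝ)) * M := by simp [mul_comm]
        _ = ((πq : ℝ) - (S.card : ℝ)) * M := by
            rw [Finset.card_sdiff_of_subset hS_subTq, hTq_card]
            congr 1
            have hle : S.card ≤ πq := by
              rw [← hTq_card]; exact Finset.card_le_card hS_subTq
            push_cast [Nat.cast_sub hle]
            ring
    have hrw : (∫ x, φ x ∂(periodicMeasure f q)) - A
        = ((πq : ℝ))⁻¹ * (D + B) - ((S.card : ℝ))⁻¹ * B := by
      rw [hIq, ← hsum_Tq_g, hsplit, hAdef]
    rw [hrw]
    exact real_estB hsR hπqR hab hκS hM0 hBb hDb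
  calc |(∫ x, φ x ∂(periodicMeasure f q)) - ∫ x, φ x ∂(periodicMeasure f p)|
      ≤ |(∫ x, φ x ∂(periodicMeasure f q)) - A| + |A - ∫ x, φ x ∂(periodicMeasure f p)| := by
        have := abs_sub_le (∫ x, φ x ∂(periodicMeasure f q)) A (∫ x, φ x ∂(periodicMeasure f p))
        linarith
    _ ≤ 2 * M * (1 - κ) + ε := add_le_add hstepB hstepA
    _ = ε + 2 * M * (1 - κ) := by ring

end Aux

/-- If `Orb(qₙ)` is a `(γₙ,κₙ)`-good approximation of `Orb(pₙ)` with `γₙ → 0` and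
`κₙ → 1`, and `μ_{pₙ}` weak* converges to `μ`, then `μ_{qₙ}` also weak* converges
to `μ`. -/
theorem weakTendsto_of_goodApprox {X : Type*} [MetricSpace X] [CompactSpace X]
    [MeasurableSpace X] [BorelSpace X]
    (f : X ≃ₜ X) (p q : ℕ → X) (γ κ : ℕ → ℝ)
    (hp : ∀ n, p n ∈ Function.periodicPts ⇑f)
    (hq : ∀ n, q n ∈ Function.periodicPts ⇑f)
    (hγpos : ∀ n, 0 < γ n) (hκ : ∀ n, 0 < κ n ∧ κ n ≤ 1)
    (hγ0 : Tendsto γ atTop (𝓝 0)) (hκ1 : Tendsto κ atTop (𝓝 1))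
    (happ : ∀ n, GoodApprox ⇑f (γ n) (κ n) (p n) (q n))
    (μ : Measure X) (hμ : IsProbabilityMeasure μ)
    (hconv : WeakTendstoC (fun n => periodicMeasure ⇑f (p n)) μ) :
    WeakTendstoC (fun n => periodicMeasure ⇑f (q n)) μ := by
  intro φ
  set M := ‖BoundedContinuousFunction.mkOfCompact φ‖ with hMdef
  have hM : ∀ x, |φ x| ≤ M := fun x => by
    simpa [Real.norm_eq_abs, hMdef] using (BoundedContinuousFunction.mkOfCompact φ).norm_coe_le_norm x
  have hM0 : (0 : ℝ) ≤ M := norm_nonneg _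
  have hu : UniformContinuous ⇑φ := CompactSpace.uniformContinuous_of_continuous φ.continuous
  have hdiff : Tendsto (fun n => (∫ x, φ x ∂(periodicMeasure ⇑f (q n)))
      - ∫ x, φ x ∂(periodicMeasure ⇑f (p n))) atTop (𝓝 0) := by
    refine NormedAddCommGroup.tendsto_nhds_zero.mpr fun ε hε => ?_
    obtain ⟨δ, hδpos, hδ⟩ := Metric.uniformContinuous_iff.mp hu (ε / 4) (by positivity)
    have hev1 : ∀ᶠ n in atTop, γ n < δ := hγ0.eventually_lt_const hδpos
    have hlim : Tendsto (fun n => ε / 4 + 2 * M * (1 - κ n)) atTop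
        (𝓝 (ε / 4 + 2 * M * (1 - 1))) :=
      tendsto_const_nhds.add ((tendsto_const_nhds.sub hκ1).const_mul (2 * M))
    have hev2 : ∀ᶠ n in atTop, ε / 4 + 2 * M * (1 - κ n) < ε :=
      hlim.eventually_lt_const (by nlinarith)
    filter_upwards [hev1, hev2] with n h1 h2
    obtain ⟨S, ρ, hw⟩ := happ n
    have hmod : ∀ a b : X, dist a b < γ n → |φ a - φ b| ≤ ε / 4 := by
      intro a b hab
      have := hδ (lt_trans hab h1)
      rw [Real.dist_eq] at this
      exact this.le
    have hb := key_estimate f.injective (hp n) (hq n) (hκ n).1 hw φ hM hmod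
    rw [Real.norm_eq_abs]
    calc |(∫ x, φ x ∂(periodicMeasure ⇑f (q n))) - ∫ x, φ x ∂(periodicMeasure ⇑f (p n))|
        ≤ ε / 4 + 2 * M * (1 - κ n) := hb
      _ < ε := h2
  have := hdiff.add (hconv φ)
  simpa using this
end

section
/- Let f be a homeomorphism of a compact metric space X and let p_0, p_1, …, p_{N+1} be periodic points of f. Suppose that for each 0 ≤ n ≤ N there are a subset X_n ⊆ Orb(p_{n+1}) and a map ρ_n : X_n → Orb(p_n) witnessing that Orb(p_{n+1}) is a (γ_n,κ_n)-good approximation of Orb(p_n) (that is, satisfying conditions (i)–(iii) of the definition), where γ_n > 0 and κ_n ∈ (0,1]. Define Y_0 := X_0 and Y_n := ρ_n^{-1}(Y_{n−1}) for 1 ≤ n ≤ N. Then μ_{p_{N+1}}(Y_N) > ∏_{n=0}^{N} κ_n. -/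
open MeasureTheory Filter Topology Function
open scoped Classical ENNReal

noncomputable def orbFinset {X : Type*} (f : X → X) (p : X) : Finset X :=
  (Finset.range (Function.minimalPeriod f p)).image (fun i => f^[i] p)

lemma coe_orbFinset {X : Type*} (f : X → X) (p : X) :
    (↑(orbFinset f p) : Set X) = orbit f p := by
  simp [orbFinset, orbit, Finset.coe_image]

lemma card_orbFinset {X : Type*} (f : X → X) (p : X) :
    (orbFinset f p).card = Function.minimalPeriod f p := by
  rw [orbFinset, Finset.card_image_of_injOn, Finset.card_range]
  intro a ha b hb h
  exact Function.iterate_injOn_Iio_minimalPeriod (by simpa using ha) (by simpa using hb) h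

lemma periodicMeasure_finset {X : Type*} [MeasurableSpace X] [MeasurableSingletonClass X]
    (f : X → X) (p : X) (hp : p ∈ Function.periodicPts f) (Y : Finset X)
    (hY : (↑Y : Set X) ⊆ orbit f p) :
    (periodicMeasure f p (↑Y : Set X)).toReal
      = (Y.card : ℝ) / (Function.minimalPeriod f p : ℝ) := by
  have hπ : 0 < Function.minimalPeriod f p := Function.minimalPeriod_pos_of_mem_periodicPts hp
  have hcount : ((Finset.range (Function.minimalPeriod f p)).filter
      (fun i => f^[i] p ∈ Y)).card = Y.card := by
    apply Finset.card_bij (fun i _ => f^[i] p)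
    · intro i hi
      exact (Finset.mem_filter.mp hi).2
    · intro a ha b hb h
      exact Function.iterate_injOn_Iio_minimalPeriod
        (by simpa using (Finset.mem_filter.mp ha).1)
        (by simpa using (Finset.mem_filter.mp hb).1) h
    · intro y hy
      obtain ⟨i, hi, hiy⟩ := hY hy
      exact ⟨i, Finset.mem_filter.mpr ⟨by simpa using hi, by simp only at hiy; rw [hiy]; exact hy⟩, by simp only at hiy; exact hiy⟩
  have happ : periodicMeasure f p (↑Y : Set X)
      = (Function.minimalPeriod f p : ℝ≥0∞)⁻¹ * (Y.card : ℝ≥0∞) := by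
    rw [periodicMeasure, Measure.smul_apply, Measure.finset_sum_apply, smul_eq_mul]
    congr 1
    calc ∑ i ∈ Finset.range (Function.minimalPeriod f p), Measure.dirac (f^[i] p) (↑Y : Set X)
        = ∑ i ∈ Finset.range (Function.minimalPeriod f p),
            if f^[i] p ∈ Y then (1 : ℝ≥0∞) else 0 := by
          refine Finset.sum_congr rfl fun i _ => ?_
          rw [Measure.dirac_apply, Set.indicator_apply]
          simp
      _ = (((Finset.range (Function.minimalPeriod f p)).filter
            (fun i => f^[i] p ∈ Y)).card : ℝ≥0∞) := by
          rw [Finset.sum_boole]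
      _ = (Y.card : ℝ≥0∞) := by rw [hcount]
  rw [happ, ENNReal.toReal_mul, ENNReal.toReal_inv, 
    ENNReal.toReal_natCast, ENNReal.toReal_natCast, div_eq_inv_mul]

/-- If `(Xₙ, ρₙ)` witness that `Orb(p_{n+1})` is a `(γₙ,κₙ)`-good approximation of
`Orb(pₙ)` for `0 ≤ n ≤ N`, and `Y₀ = X₀`, `Yₙ = ρₙ⁻¹(Y_{n−1})`, then
`μ_{p_{N+1}}(Y_N) > ∏_{n=0}^{N} κₙ`. -/
theorem periodicMeasure_iterated_preimage_gt {X : Type*} [MetricSpace X] [CompactSpace X]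
    [MeasurableSpace X] [BorelSpace X]
    (f : X ≃ₜ X) (N : ℕ) (p : ℕ → X) (γ κ : ℕ → ℝ)
    (S : ℕ → Finset X) (ρ : ℕ → X → X)
    (hp : ∀ n ≤ N + 1, p n ∈ Function.periodicPts ⇑f)
    (hγ : ∀ n ≤ N, 0 < γ n) (hκ : ∀ n ≤ N, 0 < κ n ∧ κ n ≤ 1)
    (hwit : ∀ n ≤ N, GoodApproxWitness ⇑f (γ n) (κ n) (p n) (p (n + 1)) (S n) (ρ n))
    (Y : ℕ → Finset X)
    (hY0 : Y 0 = S 0)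
    (hYrec : ∀ n, 1 ≤ n → n ≤ N → Y n = (S n).filter fun x => ρ n x ∈ Y (n - 1)) :
    (∏ n ∈ Finset.range (N + 1), κ n) <
      (periodicMeasure ⇑f (p (N + 1)) (↑(Y N) : Set X)).toReal := by
  have hYsubS : ∀ n ≤ N, Y n ⊆ S n := by
    intro n hn
    rcases Nat.eq_zero_or_pos n with h0 | h1
    · subst h0; rw [hY0]
    · rw [hYrec n h1 hn]; exact Finset.filter_subset _ _
  have hYorb : ∀ n ≤ N, (↑(Y n) : Set X) ⊆ orbit ⇑f (p (n + 1)) := by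
    intro n hn x hx
    exact (hwit n hn).1 (Finset.mem_coe.mpr (hYsubS n hn (Finset.mem_coe.mp hx)))
  have main : ∀ n, n ≤ N → (∏ k ∈ Finset.range (n + 1), κ k) <
      ((Y n).card : ℝ) / (Function.minimalPeriod ⇑f (p (n + 1)) : ℝ) := by
    intro n
    induction n with
    | zero =>
      intro _
      rw [Finset.prod_range_one, hY0]
      exact (hwit 0 (Nat.zero_le N)).2.2.1
    | succ m ih =>
      intro hn
      have hmN : m ≤ N := le_trans (Nat.le_succ m) hn
      have ihm := ih hmN
      obtain ⟨hSsub, hρorb, hκlt, -, hfib⟩ := hwit (m + 1) hn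
      have hYm_orb : (↑(Y m) : Set X) ⊆ orbit ⇑f (p (m + 1)) := hYorb m hmN
      have hYn_def : Y (m + 1) = (S (m + 1)).filter (fun x => ρ (m + 1) x ∈ Y m) := by
        simpa using hYrec (m + 1) (Nat.le_add_left 1 m) hn
      set fib : X → ℕ := fun y => ((S (m + 1)).filter (fun x => ρ (m + 1) x = y)).card with hfibdef
      have eq1 : (Y (m + 1)).card = ∑ y ∈ Y m, fib y := by
        rw [hYn_def,
          Finset.card_eq_sum_card_fiberwise (f := ρ (m + 1)) (t := Y m)
            (s := (S (m + 1)).filter (fun x => ρ (m + 1) x ∈ Y m))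
            (fun x hx => (Finset.mem_filter.mp hx).2)]
        refine Finset.sum_congr rfl fun y hy => ?_
        congr 1
        rw [Finset.filter_filter]
        apply Finset.filter_congr
        intro x hx
        simp only [and_iff_right_iff_imp]
        intro h; rw [h]; exact hy
      have eq2 : (S (m + 1)).card = ∑ y ∈ orbFinset ⇑f (p (m + 1)), fib y := by
        refine Finset.card_eq_sum_card_fiberwise fun x hx => ?_
        rw [coe_orbFinset]
        exact hρorb x hx
      have eq3 : (∑ y ∈ Y m, fib y) * (orbFinset ⇑f (p (m + 1))).card
          = (∑ z ∈ orbFinset ⇑f (p (m + 1)), fib z) * (Y m).card := by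
        calc (∑ y ∈ Y m, fib y) * (orbFinset ⇑f (p (m + 1))).card
            = ∑ y ∈ Y m, ∑ _z ∈ orbFinset ⇑f (p (m + 1)), fib y := by
              rw [Finset.sum_mul]
              exact Finset.sum_congr rfl fun y _ => by
                rw [Finset.sum_const, smul_eq_mul, mul_comm]
          _ = ∑ y ∈ Y m, ∑ z ∈ orbFinset ⇑f (p (m + 1)), fib z := by
              refine Finset.sum_congr rfl fun y hy => Finset.sum_congr rfl fun z hz => ?_
              exact hfib y (hYm_orb (Finset.mem_coe.mpr hy)) z
                (by rw [← coe_orbFinset ⇑f (p (m + 1))]; exact Finset.mem_coe.mpr hz)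
          _ = ∑ z ∈ orbFinset ⇑f (p (m + 1)), ∑ _y ∈ Y m, fib z := Finset.sum_comm
          _ = (∑ z ∈ orbFinset ⇑f (p (m + 1)), fib z) * (Y m).card := by
              rw [Finset.sum_mul]
              exact Finset.sum_congr rfl fun z _ => by
                rw [Finset.sum_const, smul_eq_mul, mul_comm]
      have keyNat : (Y (m + 1)).card * Function.minimalPeriod ⇑f (p (m + 1))
          = (S (m + 1)).card * (Y m).card := by
        rw [eq1, eq2, ← card_orbFinset ⇑f (p (m + 1))]
        exact eq3
      have hπm : (0 : ℝ) < (Function.minimalPeriod ⇑f (p (m + 1)) : ℝ) := by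
        exact_mod_cast Function.minimalPeriod_pos_of_mem_periodicPts
          (hp (m + 1) (by omega))
      have hπn : (0 : ℝ) < (Function.minimalPeriod ⇑f (p (m + 2)) : ℝ) := by
        exact_mod_cast Function.minimalPeriod_pos_of_mem_periodicPts
          (hp (m + 2) (by omega))
      have hprodpos : 0 ≤ ∏ k ∈ Finset.range (m + 1), κ k :=
        Finset.prod_nonneg fun k hk => ((hκ k (by simp at hk; omega)).1).le
      have step : (∏ k ∈ Finset.range (m + 2), κ k) <
          (((Y m).card : ℝ) / (Function.minimalPeriod ⇑f (p (m + 1)) : ℝ)) *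
            (((S (m + 1)).card : ℝ) / (Function.minimalPeriod ⇑f (p (m + 2)) : ℝ)) := by
        rw [Finset.prod_range_succ]
        exact mul_lt_mul'' ihm hκlt hprodpos (hκ (m + 1) hn).1.le
      refine step.trans_le (le_of_eq ?_)
      have keyR : ((Y (m + 1)).card : ℝ) * (Function.minimalPeriod ⇑f (p (m + 1)) : ℝ)
          = ((S (m + 1)).card : ℝ) * ((Y m).card : ℝ) := by exact_mod_cast keyNat
      simp only [show m + 1 + 1 = m + 2 from rfl]
      field_simp
      linear_combination (-1 : ℝ) * keyR
  have hYN := hYorb N le_rfl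
  rw [periodicMeasure_finset ⇑f (p (N + 1)) (hp (N + 1) le_rfl) (Y N) hYN]
  exact main N le_rfl
end

section
/- Let m ≥ 1 and let w ∈ ℝ^m. Suppose that for every subset I ⊆ {1,…,m} a vector v_I ∈ ℝ^m is given such that (v_I)_i > w_i for every i ∈ I and (v_I)_i < w_i for every i ∉ I. Then w belongs to the topological interior of the convex hull of the finite set {v_I : I ⊆ {1,…,m}}. -/
open Finset in
private lemma sum_apply_linear {m : ℕ} (f : (Fin m → ℝ) →ₗ[ℝ] ℝ) (x : Fin m → ℝ) :
    f x = ∑ i, x i * f (Pi.single i 1) := by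
  conv_lhs => rw [← Finset.univ_sum_single x, map_sum]
  refine Finset.sum_congr rfl fun i _ => ?_
  have : Pi.single i (x i) = x i • (Pi.single i (1 : ℝ) : Fin m → ℝ) := by
    rw [← Pi.single_smul, smul_eq_mul, mul_one]
  rw [this, map_smul, smul_eq_mul]

open Finset in
private lemma key_lt {m : ℕ} (w : Fin m → ℝ) (v : Set (Fin m) → Fin m → ℝ)
    (hv : ∀ I : Set (Fin m), (∀ i ∈ I, w i < v I i) ∧ ∀ i ∉ I, v I i < w i)
    (c : Fin m → ℝ) (hc : c ≠ 0) :
    ∃ I, ∑ i, v I i * c i < ∑ i, w i * c i := by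
  refine ⟨{i | c i < 0}, ?_⟩
  obtain ⟨i₀, hi₀⟩ := Function.ne_iff.1 hc
  have hterm : ∀ i, c i ≠ 0 → v {i | c i < 0} i * c i < w i * c i := by
    intro i hi
    rcases lt_or_gt_of_ne hi with h | h
    · exact mul_lt_mul_of_neg_right ((hv _).1 i h) h
    · exact mul_lt_mul_of_pos_right ((hv _).2 i (by simp [not_lt.2 h.le])) h
  refine Finset.sum_lt_sum (fun i _ => ?_) ⟨i₀, Finset.mem_univ _, hterm i₀ hi₀⟩
  by_cases hi : c i = 0
  · simp [hi]
  · exact (hterm i hi).le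

/-- If for every subset `I ⊆ {1,…,m}` there is a vector `v_I` with `(v_I)_i > w_i` for
`i ∈ I` and `(v_I)_i < w_i` for `i ∉ I`, then `w` lies in the interior of the convex
hull of the `v_I`. -/
theorem mem_interior_convexHull_of_antipodal {m : ℕ} (hm : 1 ≤ m)
    (w : Fin m → ℝ) (v : Set (Fin m) → Fin m → ℝ)
    (hv : ∀ I : Set (Fin m), (∀ i ∈ I, w i < v I i) ∧ ∀ i ∉ I, v I i < w i) :
    w ∈ interior (convexHull ℝ (Set.range v)) := by
  set S := convexHull ℝ (Set.range v) with hS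
  -- the affine span of the points is everything
  have hspan : affineSpan ℝ (Set.range v) = ⊤ := by
    rw [AffineSubspace.affineSpan_eq_top_iff_vectorSpan_eq_top_of_nonempty ℝ (Fin m → ℝ) (Fin m → ℝ) (Set.range_nonempty v)]
    by_contra h
    obtain ⟨f, hf0, hfmap⟩ := Submodule.exists_dual_map_eq_bot_of_lt_top
      (p := vectorSpan ℝ (Set.range v)) (lt_top_iff_ne_top.2 h) inferInstance
    set c : Fin m → ℝ := fun i => f (Pi.single i 1) with hcdef
    have hc : c ≠ 0 := by
      intro hc0
      apply hf0
      ext x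
      have hx := congrFun hc0 x
      rw [hcdef] at hx
      simpa using hx
    obtain ⟨I, hI⟩ := key_lt w v hv c hc
    obtain ⟨J, hJ⟩ := key_lt w v hv (-c) (by simpa using neg_ne_zero.2 hc)
    simp only [Pi.neg_apply, mul_neg, Finset.sum_neg_distrib, neg_lt_neg_iff] at hJ
    -- so f (v I) < f w < f (v J), but f is constant on the points
    have hmem : v J - v I ∈ vectorSpan ℝ (Set.range v) :=
      vsub_mem_vectorSpan ℝ ⟨J, rfl⟩ ⟨I, rfl⟩
    have hzero : f (v J - v I) = 0 := by
      have : f (v J - v I) ∈ Submodule.map f (vectorSpan ℝ (Set.range v)) :=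
        Submodule.mem_map_of_mem hmem
      rw [hfmap] at this
      simpa using this
    rw [map_sub, sub_eq_zero] at hzero
    rw [sum_apply_linear f (v I), sum_apply_linear f (v J)] at hzero
    have : ∑ i, v I i * c i < ∑ i, v J i * c i := hI.trans hJ
    rw [hcdef] at this
    exact absurd hzero (ne_of_gt this)
  have hconv : Convex ℝ S := convex_convexHull ℝ _
  obtain ⟨x₀, hx₀⟩ : (interior S).Nonempty :=
    interior_convexHull_nonempty_iff_affineSpan_eq_top.2 hspan
  by_contra hw
  obtain ⟨f, hf⟩ := geometric_hahn_banach_point_open hconv.interior isOpen_interior hw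
  have hfx₀ : f w < f x₀ := hf x₀ hx₀
  set c : Fin m → ℝ := fun i => f (Pi.single i 1) with hcdef
  have hsum : ∀ x, f x = ∑ i, x i * c i := fun x =>
    sum_apply_linear (f : (Fin m → ℝ) →ₗ[ℝ] ℝ) x
  have hc : c ≠ 0 := by
    intro hc0
    have h1 : f w = 0 := by rw [hsum, hc0]; simp
    have h2 : f x₀ = 0 := by rw [hsum, hc0]; simp
    rw [h1, h2] at hfx₀; exact lt_irrefl _ hfx₀
  -- every point of S has f-value ≥ f w
  have hle : ∀ I, f w ≤ f (v I) := by
    intro I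
    by_contra hlt
    push_neg at hlt
    have hvI : v I ∈ S := subset_convexHull ℝ _ ⟨I, rfl⟩
    have h1 : 0 < f x₀ - f (v I) := by linarith
    set t : ℝ := (f w - f (v I)) / (2 * (f x₀ - f (v I))) with htdef
    have ht0 : 0 < t := div_pos (by linarith) (by linarith)
    have ht1 : t ≤ 1 := by
      rw [htdef, div_le_one (by linarith)]
      linarith
    have hp : t • x₀ + (1 - t) • v I ∈ interior S :=
      hconv.combo_interior_closure_mem_interior hx₀ (subset_closure hvI) ht0
        (by linarith) (by ring)
    have hlt2 := hf _ hp
    rw [map_add, map_smul, map_smul, smul_eq_mul, smul_eq_mul] at hlt2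
    have ht : t * (f x₀ - f (v I)) = (f w - f (v I)) / 2 := by
      rw [htdef]; field_simp
    nlinarith
  obtain ⟨I, hI⟩ := key_lt w v hv c hc
  have := hle I
  rw [hsum w, hsum (v I)] at this
  exact absurd hI (not_lt.2 this)
end

section
/- Let f be a homeomorphism of a compact metric space X and let (p_n)_{n≥0} be periodic points of f. Suppose that for each n ≥ 0 there are a subset X_n ⊆ Orb(p_{n+1}) and a map ρ_n : X_n → Orb(p_n) witnessing that Orb(p_{n+1}) is a (γ_n,κ_n)-good approximation of Orb(p_n), where γ_n > 0, κ_n ∈ (0,1] and ∏_{n≥0} κ_n > 0. Define Y_0 := X_0 and Y_n := ρ_n^{-1}(Y_{n−1}) for n ≥ 1, and set Y := ⋂_{N≥0} closure(⋃_{n≥N} Y_n). If the periodic measures μ_{p_n} converge in the weak* topology to a Borel probability measure μ, then μ(Y) ≥ ∏_{n=0}^{∞} κ_n > 0. -/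
open MeasureTheory Filter Topology Function
open scoped Classical ENNReal

/-!
All fibres of `ρₙ` over `Orb(pₙ)` have the same size, so `Yₙ = ρₙ⁻¹(Yₙ₋₁)` fills the fraction
`(#Yₙ₋₁ / π(pₙ)) · (#Sₙ / π(pₙ₊₁))` of `Orb(pₙ₊₁)`; by induction `μ_{pₙ₊₁}(Yₙ) ≥ κ₀ ⋯ κₙ ≥ c`.
The closed set `closure (⋃_{n ≥ N} Yₙ)` therefore has mass at least `c` under all late `μ_{pₙ}`,
hence under `μ` by the portmanteau theorem, and continuity from above passes this bound to the
intersection over `N`.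
-/

section PeriodicMeasure

variable {X : Type*} {f : X → X} {p : X}

lemma coe_image_range_iterate :
    (↑((Finset.range (minimalPeriod f p)).image (f^[·] p)) : Set X) = orbit f p := by
  simp [orbit]

lemma card_image_range_iterate :
    ((Finset.range (minimalPeriod f p)).image (f^[·] p)).card = minimalPeriod f p := by
  rw [Finset.card_image_of_injOn (by simpa using iterate_injOn_Iio_minimalPeriod),
    Finset.card_range]

lemma mem_orbit_self (hp : p ∈ periodicPts f) : p ∈ orbit f p :=
  ⟨0, minimalPeriod_pos_of_mem_periodicPts hp, rfl⟩

variable [MeasurableSpace X]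

lemma isProbabilityMeasure_periodicMeasure (hp : p ∈ periodicPts f) :
    IsProbabilityMeasure (periodicMeasure f p) := by
  constructor
  have hπ : (minimalPeriod f p : ℝ≥0∞) ≠ 0 := by
    exact_mod_cast (minimalPeriod_pos_of_mem_periodicPts hp).ne'
  simp [periodicMeasure, ENNReal.inv_mul_cancel hπ (ENNReal.natCast_ne_top _)]

lemma periodicMeasure_apply_finset [MeasurableSingletonClass X] {A : Finset X}
    (hA : ↑A ⊆ orbit f p) :
    periodicMeasure f p A = A.card / minimalPeriod f p := by
  have hcard : ((Finset.range (minimalPeriod f p)).filter (f^[·] p ∈ A)).card = A.card := by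
    refine Finset.card_nbij (f^[·] p) (fun i hi => (Finset.mem_filter.1 hi).2) ?_ ?_
    · exact iterate_injOn_Iio_minimalPeriod.mono fun i hi =>
        Finset.mem_range.1 (Finset.mem_filter.1 hi).1
    · intro a ha
      obtain ⟨i, hi, rfl⟩ := hA ha
      exact ⟨i, by simpa [Set.mem_Iio.1 hi] using ha, rfl⟩
  simp [periodicMeasure, Measure.dirac_apply, Set.indicator, Finset.sum_boole, hcard,
    ENNReal.div_eq_inv_mul]

end PeriodicMeasure

namespace GoodApproxWitness

variable {X : Type*} [MetricSpace X] {f : X → X} {γ κ : ℝ} {p q : X} {S : Finset X}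
  {ρ : X → X}

lemma card_filter_div_minimalPeriod (hw : GoodApproxWitness f γ κ p q S ρ)
    (hp : p ∈ periodicPts f) {T : Finset X} (hT : ↑T ⊆ orbit f p) :
    ((S.filter (ρ · ∈ T)).card : ℝ) / minimalPeriod f q =
      T.card / minimalPeriod f p * (S.card / minimalPeriod f q) := by
  obtain ⟨-, hρ, -, -, hfib⟩ := hw
  set t := (S.filter (ρ · = p)).card
  have hfib' : ∀ y ∈ orbit f p, (S.filter (ρ · = y)).card = t := fun y hy =>
    hfib y hy p (mem_orbit_self hp)
  have hS : S.card = minimalPeriod f p * t := by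
    have hρ' : ∀ x ∈ S, ρ x ∈ (Finset.range (minimalPeriod f p)).image (f^[·] p) :=
      fun x hx => by rw [← Finset.mem_coe, coe_image_range_iterate]; exact hρ x hx
    rw [Finset.card_eq_sum_card_fiberwise hρ', Finset.sum_const_nat fun y hy => hfib' y ?_,
      card_image_range_iterate]
    rwa [← Finset.mem_coe, coe_image_range_iterate] at hy
  have hST : (S.filter (ρ · ∈ T)).card = T.card * t := by
    rw [← Finset.sum_card_fiberwise_eq_card_filter,
      Finset.sum_const_nat fun y hy => hfib' y (hT hy)]
  have hπ : (minimalPeriod f p : ℝ) ≠ 0 := by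
    exact_mod_cast (minimalPeriod_pos_of_mem_periodicPts hp).ne'
  rw [hST, hS]
  push_cast
  field_simp

end GoodApproxWitness

section Chain

variable {X : Type*} [MetricSpace X] {f : X → X} {p : ℕ → X} {γ κ : ℕ → ℝ}
  {S Y : ℕ → Finset X} {ρ : ℕ → X → X}
  (hwit : ∀ n, GoodApproxWitness f (γ n) (κ n) (p n) (p (n + 1)) (S n) (ρ n))
  (hY0 : Y 0 = S 0) (hYsucc : ∀ n, Y (n + 1) = (S (n + 1)).filter (ρ (n + 1) · ∈ Y n))
include hwit hY0 hYsucc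

lemma coe_subset_orbit_of_preimage_chain (n : ℕ) : ↑(Y n) ⊆ orbit f (p (n + 1)) := by
  refine subset_trans ?_ (hwit n).1
  cases n with
  | zero => rw [hY0]
  | succ n => rw [hYsucc]; exact Finset.coe_subset.2 (Finset.filter_subset _ _)

lemma prod_le_card_div_of_preimage_chain (hp : ∀ n, p n ∈ periodicPts f)
    (hκ : ∀ n, 0 < κ n) (n : ℕ) :
    ∏ k ∈ Finset.range (n + 1), κ k ≤ (Y n).card / minimalPeriod f (p (n + 1)) := by
  induction n with
  | zero => simpa [hY0] using (hwit 0).2.2.1.le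
  | succ n ih =>
    rw [Finset.prod_range_succ, hYsucc, (hwit (n + 1)).card_filter_div_minimalPeriod (hp _)
      (coe_subset_orbit_of_preimage_chain hwit hY0 hYsucc n)]
    exact mul_le_mul ih (hwit (n + 1)).2.2.1.le (hκ _).le (by positivity)

end Chain

namespace WeakTendstoC

variable {X : Type*} [TopologicalSpace X] [MeasurableSpace X] {μs : ℕ → Measure X}
  {μ : Measure X}

lemma comp (h : WeakTendstoC μs μ) {φ : ℕ → ℕ} (hφ : Tendsto φ atTop atTop) :
    WeakTendstoC (μs ∘ φ) μ :=
  fun g => (h g).comp hφ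

variable [OpensMeasurableSpace X] [HasOuterApproxClosed X] [∀ n, IsProbabilityMeasure (μs n)]
  [IsProbabilityMeasure μ]

lemma le_measure_of_isClosed (h : WeakTendstoC μs μ) {F : Set X} (hF : IsClosed F)
    {a : ℝ≥0∞} (ha : ∀ᶠ n in atTop, a ≤ μs n F) : a ≤ μ F := by
  let ν : ℕ → ProbabilityMeasure X := fun n => ⟨μs n, inferInstance⟩
  have hν : Tendsto ν atTop (𝓝 ⟨μ, inferInstance⟩) :=
    ProbabilityMeasure.tendsto_iff_forall_integral_tendsto.2 fun g => h g.toContinuousMap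
  calc a ≤ liminf (fun n => μs n F) atTop := le_liminf_of_le (by isBoundedDefault) ha
    _ ≤ limsup (fun n => μs n F) atTop := liminf_le_limsup
    _ ≤ μ F := ProbabilityMeasure.limsup_measure_closed_le_of_tendsto hν hF

lemma le_measure_iInter_closure_iUnion (h : WeakTendstoC μs μ) {A : ℕ → Set X} {a : ℝ≥0∞}
    (ha : ∀ n, a ≤ μs n (A n)) : a ≤ μ (⋂ N, closure (⋃ n ∈ Set.Ici N, A n)) := by
  have hanti : Antitone fun N => closure (⋃ n ∈ Set.Ici N, A n) := fun N M hNM =>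
    closure_mono (Set.biUnion_subset_biUnion_left (Set.Ici_subset_Ici.2 hNM))
  rw [hanti.measure_iInter (fun N => isClosed_closure.nullMeasurableSet)
    ⟨0, measure_ne_top μ _⟩]
  refine le_iInf fun N => h.le_measure_of_isClosed isClosed_closure ?_
  filter_upwards [eventually_ge_atTop N] with n hn
  exact (ha n).trans (measure_mono (subset_closure.trans' (Set.subset_biUnion_of_mem hn)))

end WeakTendstoC

lemma le_prod_range_of_tendsto {κ : ℕ → ℝ} (hκ : ∀ n, 0 ≤ κ n ∧ κ n ≤ 1) {c : ℝ}
    (hprod : Tendsto (fun N => ∏ n ∈ Finset.range (N + 1), κ n) atTop (𝓝 c)) (N : ℕ) :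
    c ≤ ∏ n ∈ Finset.range (N + 1), κ n := by
  refine Antitone.le_of_tendsto (fun N M hNM => ?_) hprod N
  exact Finset.prod_le_prod_of_subset_of_le_one (by simpa using hNM) (fun n _ => (hκ n).1)
    fun n _ _ => (hκ n).2

theorem measure_limsup_preimages_pos_general {X : Type*} [MetricSpace X]
    [MeasurableSpace X] [BorelSpace X]
    (f : X ≃ₜ X) (p : ℕ → X) (γ κ : ℕ → ℝ)
    (S : ℕ → Finset X) (ρ : ℕ → X → X)
    (hp : ∀ n, p n ∈ Function.periodicPts ⇑f)
    (hκ : ∀ n, 0 < κ n ∧ κ n ≤ 1)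
    (hwit : ∀ n, GoodApproxWitness ⇑f (γ n) (κ n) (p n) (p (n + 1)) (S n) (ρ n))
    (Y : ℕ → Finset X)
    (hY0 : Y 0 = S 0)
    (hYrec : ∀ n, 1 ≤ n → Y n = (S n).filter fun x => ρ n x ∈ Y (n - 1))
    (c : ℝ) (hc : 0 < c)
    (hprod : Tendsto (fun N => ∏ n ∈ Finset.range (N + 1), κ n) atTop (𝓝 c))
    (μ : Measure X) (hμ : IsProbabilityMeasure μ)
    (hconv : WeakTendstoC (fun n => periodicMeasure ⇑f (p n)) μ) :
    ENNReal.ofReal c ≤ μ (⋂ N : ℕ, closure (⋃ n ∈ Set.Ici N, (↑(Y n) : Set X))) ∧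
      0 < μ (⋂ N : ℕ, closure (⋃ n ∈ Set.Ici N, (↑(Y n) : Set X))) := by
  have hYsucc : ∀ n, Y (n + 1) = (S (n + 1)).filter (ρ (n + 1) · ∈ Y n) := fun n => by
    simpa using hYrec (n + 1) n.succ_pos
  have : ∀ n, IsProbabilityMeasure (periodicMeasure f (p n)) := fun n =>
    isProbabilityMeasure_periodicMeasure (hp n)
  have hmass : ∀ n, ENNReal.ofReal c ≤ periodicMeasure f (p (n + 1)) (Y n) := fun n => by
    have hc_le : c ≤ (Y n).card / minimalPeriod f (p (n + 1)) :=
      (le_prod_range_of_tendsto (fun n => ⟨(hκ n).1.le, (hκ n).2⟩) hprod n).trans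
        (prod_le_card_div_of_preimage_chain hwit hY0 hYsucc hp (fun n => (hκ n).1) n)
    have hπ : (0 : ℝ) < minimalPeriod f (p (n + 1)) := by
      exact_mod_cast minimalPeriod_pos_of_mem_periodicPts (hp _)
    rw [periodicMeasure_apply_finset (coe_subset_orbit_of_preimage_chain hwit hY0 hYsucc n),
      ← ENNReal.ofReal_natCast, ← ENNReal.ofReal_natCast, ← ENNReal.ofReal_div_of_pos hπ]
    exact ENNReal.ofReal_le_ofReal hc_le
  have hshift : WeakTendstoC (fun n => periodicMeasure f (p (n + 1))) μ :=
    hconv.comp (tendsto_add_atTop_nat 1)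
  have hY := hshift.le_measure_iInter_closure_iUnion hmass
  exact ⟨hY, (ENNReal.ofReal_pos.2 hc).trans_le hY⟩

/-- If `(Xₙ, ρₙ)` witness good approximations along the sequence, `∏ κₙ = c > 0`,
`Y₀ = X₀`, `Yₙ = ρₙ⁻¹(Y_{n−1})`, `Y = ⋂_N closure(⋃_{n≥N} Yₙ)`, and the periodic
measures `μ_{pₙ}` weak* converge to `μ`, then `μ(Y) ≥ ∏ₙ κₙ > 0`. -/
theorem measure_limsup_preimages_pos {X : Type*} [MetricSpace X] [CompactSpace X]
    [MeasurableSpace X] [BorelSpace X]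
    (f : X ≃ₜ X) (p : ℕ → X) (γ κ : ℕ → ℝ)
    (S : ℕ → Finset X) (ρ : ℕ → X → X)
    (hp : ∀ n, p n ∈ Function.periodicPts ⇑f)
    (hγ : ∀ n, 0 < γ n) (hκ : ∀ n, 0 < κ n ∧ κ n ≤ 1)
    (hwit : ∀ n, GoodApproxWitness ⇑f (γ n) (κ n) (p n) (p (n + 1)) (S n) (ρ n))
    (Y : ℕ → Finset X)
    (hY0 : Y 0 = S 0)
    (hYrec : ∀ n, 1 ≤ n → Y n = (S n).filter fun x => ρ n x ∈ Y (n - 1))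
    (c : ℝ) (hc : 0 < c)
    (hprod : Tendsto (fun N => ∏ n ∈ Finset.range (N + 1), κ n) atTop (𝓝 c))
    (μ : Measure X) (hμ : IsProbabilityMeasure μ)
    (hconv : WeakTendstoC (fun n => periodicMeasure ⇑f (p n)) μ) :
    ENNReal.ofReal c ≤ μ (⋂ N : ℕ, closure (⋃ n ∈ Set.Ici N, (↑(Y n) : Set X))) ∧
      0 < μ (⋂ N : ℕ, closure (⋃ n ∈ Set.Ici N, (↑(Y n) : Set X))) :=
  measure_limsup_preimages_pos_general f p γ κ S ρ hp hκ hwit Y hY0 hYrec c hc hprod μ hμ hconv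
end

section
/- Let f be a homeomorphism of a compact metric space X and let (p_ℓ)_{ℓ≥0} be periodic points of f. Suppose that for each ℓ ≥ 0 there are a subset X_ℓ ⊆ Orb(p_{ℓ+1}) and a map ρ_ℓ : X_ℓ → Orb(p_ℓ) witnessing that Orb(p_{ℓ+1}) is a (γ_ℓ,κ_ℓ)-good approximation of Orb(p_ℓ), where γ_ℓ > 0, κ_ℓ ∈ (0,1], and γ_{ℓ+1} < γ_ℓ/2 for all ℓ. Fix n ≥ 0, and for j ≥ n define Z_n^{(n)} := Orb(p_n) and Z_j^{(n)} := ρ_{j−1}^{-1}(Z_{j−1}^{(n)}) ⊆ Orb(p_j) for j > n. Then every point of Z_j^{(n)} lies at distance less than 2γ_n from Orb(p_n); consequently the set ⋂_{N≥n} closure(⋃_{j≥N} Z_j^{(n)}) is contained in the closed 2γ_n-neighborhood of Orb(p_n). -/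
open MeasureTheory Filter Topology Function Metric
open scoped Classical

/-- If `(X_ℓ, ρ_ℓ)` witness good approximations along the sequence, with
`γ_{ℓ+1} < γ_ℓ/2`, and `Z_n = Orb(pₙ)`, `Z_{j+1} = ρ_j⁻¹(Z_j)` for `j ≥ n`, then every
point of `Z_j` is within distance `2γₙ` of `Orb(pₙ)`, and hence
`⋂_{N≥n} closure(⋃_{j≥N} Z_j)` is contained in the closed `2γₙ`-neighborhood of
`Orb(pₙ)`. -/
theorem iterated_preimages_near_orbit {X : Type*} [MetricSpace X] [CompactSpace X]
    (f : X ≃ₜ X) (p : ℕ → X) (γ κ : ℕ → ℝ)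
    (S : ℕ → Finset X) (ρ : ℕ → X → X)
    (hp : ∀ ℓ, p ℓ ∈ Function.periodicPts ⇑f)
    (hγ : ∀ ℓ, 0 < γ ℓ) (hκ : ∀ ℓ, 0 < κ ℓ ∧ κ ℓ ≤ 1)
    (hγhalf : ∀ ℓ, γ (ℓ + 1) < γ ℓ / 2)
    (hwit : ∀ ℓ, GoodApproxWitness ⇑f (γ ℓ) (κ ℓ) (p ℓ) (p (ℓ + 1)) (S ℓ) (ρ ℓ))
    (n : ℕ) (Z : ℕ → Set X)
    (hZn : Z n = orbit ⇑f (p n))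
    (hZrec : ∀ j, n ≤ j → Z (j + 1) = {x ∈ (↑(S j) : Set X) | ρ j x ∈ Z j}) :
    (∀ j, n ≤ j → ∀ x ∈ Z j, ∃ y ∈ orbit ⇑f (p n), dist x y < 2 * γ n) ∧
    (⋂ N ∈ Set.Ici n, closure (⋃ j ∈ Set.Ici N, Z j)) ⊆
      {x | infDist x (orbit ⇑f (p n)) ≤ 2 * γ n} := by
  -- A sharper bound by induction : dist ≤ 2γₙ − 2γⱼ.
  have key : ∀ j, n ≤ j → ∀ x ∈ Z j,
      ∃ y ∈ orbit ⇑f (p n), dist x y ≤ 2 * γ n - 2 * γ j := by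
    intro j hj
    induction j, hj using Nat.le_induction with
    | base =>
      intro x hx
      rw [hZn] at hx
      exact ⟨x, hx, by simp⟩
    | succ j hj ih =>
      intro x hx
      rw [hZrec j hj] at hx
      obtain ⟨hxS, hxρ⟩ := hx
      obtain ⟨y, hy, hdy⟩ := ih (ρ j x) hxρ
      refine ⟨y, hy, ?_⟩
      have hper : 0 < Function.minimalPeriod ⇑f (p j) :=
        Function.minimalPeriod_pos_of_mem_periodicPts (hp j)
      have hd : dist x (ρ j x) < γ j := by
        have := (hwit j).2.2.2.1 x hxS 0 hper
        simpa using this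
      have := dist_triangle x (ρ j x) y
      have h2 := hγhalf j
      linarith
  constructor
  · intro j hj x hx
    obtain ⟨y, hy, hd⟩ := key j hj x hx
    exact ⟨y, hy, lt_of_le_of_lt hd (by have := hγ j; linarith)⟩
  · intro x hx
    have hx' : x ∈ closure (⋃ j ∈ Set.Ici n, Z j) := by
      simp only [Set.mem_iInter] at hx
      exact hx n (Set.mem_Ici.mpr le_rfl)
    have hclosed : IsClosed {x : X | infDist x (orbit ⇑f (p n)) ≤ 2 * γ n} :=
      isClosed_le (continuous_infDist_pt _) continuous_const
    refine hclosed.closure_subset_iff.mpr ?_ hx'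
    intro z hz
    simp only [Set.mem_iUnion] at hz
    obtain ⟨j, hj, hzj⟩ := hz
    obtain ⟨y, hy, hd⟩ := key j hj z hzj
    have : infDist z (orbit ⇑f (p n)) ≤ dist z y := infDist_le_dist_of_mem hy
    have := hγ j
    simp only [Set.mem_setOf_eq]
    linarith
end
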